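/- arXiv:1106.1918 — 2 statements merged into one kernel-verified Lean document; each statement's English description precedes it below -/
import Mathlib

section
/- If a Markov transition semigroup (U_t) on a Polish space X is strong Feller at some time t₁ > 0 and irreducible at some time t₂ > 0, and μ, ν are invariant probability measures for (U_t), then μ = ν (uniqueness of the invariant measure via regularity). -/
/-!
Strong Feller at `t₁` makes `y ↦ P t₁ y A` continuous, so `{y | 0 < P t₁ y A}` is open; by
irreducibility at `t₂` it is charged by every `P t₂ x` as soon as it is nonempty. Hence whether
`P (t₂ + t₁) x A` vanishes does not depend on `x` (Khas'minskii), i.e. the kernel `P (t₂ + t₁)` is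
regular.

For Doob's part, let `S` be the positive set of a Hahn decomposition of `μ - ν`. Comparing the two
invariance identities for `S` shows that one step of the kernel moves no mass of the negative part
`ρ` of `μ - ν` into `S`. Either the kernel gives `S` mass zero from some `x₀`, hence from every
`x` by regularity, and `μ S = ν S = 0`; or `ρ = 0`. In both cases `μ` and `ν` agree on `S` or on `Sᶜ`, and being
probability measures comparable on the other piece, they coincide.
-/

open Set MeasureTheory ProbabilityTheory

lemma MeasureTheory.Measure.eq_of_restrict_eq_of_restrict_compl_le {X : Type*}
    [MeasurableSpace X] {μ ν : Measure X} [IsProbabilityMeasure μ] [IsProbabilityMeasure ν]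
    {S : Set X} (hS : MeasurableSet S) (heq : μ.restrict S = ν.restrict S)
    (hle : μ.restrict Sᶜ ≤ ν.restrict Sᶜ) : μ = ν := by
  have hSc : μ.restrict Sᶜ = ν.restrict Sᶜ := by
    refine Measure.eq_of_le_of_measure_univ_eq hle ?_
    have hμν : μ S = ν S := by
      rw [← Measure.restrict_apply_univ, heq, Measure.restrict_apply_univ]
    rw [Measure.restrict_apply_univ, Measure.restrict_apply_univ, prob_compl_eq_one_sub hS,
      prob_compl_eq_one_sub hS, hμν]
  rw [← Measure.restrict_add_restrict_compl (μ := μ) hS, heq, hSc,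
    Measure.restrict_add_restrict_compl hS]

namespace ProbabilityTheory.Kernel

variable {X Y Z : Type*} [MeasurableSpace X] [MeasurableSpace Y] [MeasurableSpace Z]

def IsStrongFeller [TopologicalSpace X] (κ : Kernel X Y) : Prop :=
  ∀ φ : Y → ℝ, Measurable φ → (∃ K : ℝ, ∀ y, |φ y| ≤ K) → Continuous fun x => ∫ y, φ y ∂κ x

def IsTopologicallyIrreducible [TopologicalSpace Y] (κ : Kernel X Y) : Prop :=
  ∀ x U, IsOpen U → U.Nonempty → 0 < κ x U

def IsRegular (κ : Kernel X Y) : Prop :=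
  ∀ x x', κ x ≪ κ x'

section StrongFeller

variable [TopologicalSpace X] {κ : Kernel X Y} {A : Set Y}

lemma IsStrongFeller.continuous_measureReal (hκ : κ.IsStrongFeller) (hA : MeasurableSet A) :
    Continuous fun x => (κ x).real A := by
  have hbdd : ∃ K : ℝ, ∀ y, |A.indicator 1 y| ≤ K :=
    ⟨1, fun y => by by_cases hy : y ∈ A <;> simp [hy]⟩
  simpa only [integral_indicator_one hA] using hκ _ (measurable_one.indicator hA) hbdd

lemma IsStrongFeller.isOpen_setOf_pos [IsFiniteKernel κ] (hκ : κ.IsStrongFeller)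
    (hA : MeasurableSet A) : IsOpen {x | 0 < κ x A} := by
  have hpos : {x | 0 < κ x A} = (fun x => (κ x).real A) ⁻¹' Ioi 0 := by
    ext x
    simp [measureReal_def, ENNReal.toReal_pos_iff, measure_lt_top]
  rw [hpos]
  exact isOpen_Ioi.preimage (hκ.continuous_measureReal hA)

end StrongFeller

section Khasminskii

variable [TopologicalSpace Y] {κ : Kernel X Y} {η : Kernel Y Z} [IsFiniteKernel η]

lemma comp_apply_pos_iff (hη : η.IsStrongFeller) (hκ : κ.IsTopologicallyIrreducible) {A : Set Z}
    (hA : MeasurableSet A) (x : X) : 0 < (η ∘ₖ κ) x A ↔ {y | 0 < η y A}.Nonempty := by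
  have hsupp : Function.support (fun y => η y A) = {y | 0 < η y A} := by
    ext y; simp [pos_iff_ne_zero]
  rw [comp_apply' _ _ _ hA, lintegral_pos_iff_support (η.measurable_coe hA), hsupp]
  exact ⟨nonempty_of_measure_ne_zero ∘ ne_of_gt, hκ x _ (hη.isOpen_setOf_pos hA)⟩

lemma IsStrongFeller.isRegular_comp (hη : η.IsStrongFeller) (hκ : κ.IsTopologicallyIrreducible) :
    (η ∘ₖ κ).IsRegular := by
  refine fun x x' => Measure.AbsolutelyContinuous.mk fun A hA hx' => ?_
  by_contra hx
  have hpos := (comp_apply_pos_iff hη hκ hA x).1 (pos_iff_ne_zero.2 hx)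
  exact ((comp_apply_pos_iff hη hκ hA x').2 hpos).ne' hx'

end Khasminskii

section Doob

variable {κ : Kernel X X} {μ ν : Measure X} {S : Set X}

lemma Invariant.lintegral_apply (h : κ.Invariant μ) {A : Set X} (hA : MeasurableSet A) :
    ∫⁻ x, κ x A ∂μ = μ A := by
  rw [← Measure.bind_apply hA κ.aemeasurable, h.def]

lemma Invariant.lintegral_apply_sub_restrict_compl_eq_zero [IsMarkovKernel κ] [IsFiniteMeasure μ]
    [IsFiniteMeasure ν]
    (hμ : κ.Invariant μ) (hν : κ.Invariant ν) (hS : MeasurableSet S)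
    (hpos : ν.restrict S ≤ μ.restrict S) (hneg : μ.restrict Sᶜ ≤ ν.restrict Sᶜ) :
    ∫⁻ x, κ x S ∂(ν.restrict Sᶜ - μ.restrict Sᶜ) = 0 := by
  set ρp := μ.restrict S - ν.restrict S
  set ρm := ν.restrict Sᶜ - μ.restrict Sᶜ
  have hρp : ρp + ν.restrict S = μ.restrict S := Measure.sub_add_cancel_of_le hpos
  have hρm : ρm + μ.restrict Sᶜ = ν.restrict Sᶜ := Measure.sub_add_cancel_of_le hneg
  set c := ∫⁻ x in S, κ x S ∂ν + ∫⁻ x in Sᶜ, κ x S ∂μ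
  have hμS : μ S = ∫⁻ x, κ x S ∂ρp + c := by
    rw [← hμ.lintegral_apply hS, ← lintegral_add_compl _ hS, ← hρp, lintegral_add_measure,
      add_assoc]
  have hνS : ν S = c + ∫⁻ x, κ x S ∂ρm := by
    rw [← hν.lintegral_apply hS, ← lintegral_add_compl _ hS, ← hρm, lintegral_add_measure]
    ring
  clear_value c ρp ρm
  have hmass : μ S = ρp univ + ν S := by
    rw [← Measure.restrict_apply_univ, ← hρp, Measure.add_apply, Measure.restrict_apply_univ]
  have hρp_bound : ∫⁻ x, κ x S ∂ρp ≤ ρp univ :=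
    (lintegral_mono fun _ => prob_le_one).trans_eq lintegral_one
  have hfin : ρp univ + c ≠ ⊤ :=
    ne_top_of_le_ne_top (measure_ne_top μ S) (by rw [hmass, hνS, ← add_assoc]; exact le_self_add)
  refine nonpos_iff_eq_zero.1 (ENNReal.le_of_add_le_add_left hfin ?_)
  calc ρp univ + c + ∫⁻ x, κ x S ∂ρm = μ S := by rw [hmass, hνS, ← add_assoc]
    _ ≤ ρp univ + c := by rw [hμS]; gcongr
    _ = ρp univ + c + 0 := (add_zero _).symm

theorem IsRegular.eq_of_invariant [IsMarkovKernel κ] (hκ : κ.IsRegular) [IsProbabilityMeasure μ]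
    [IsProbabilityMeasure ν] (hμ : κ.Invariant μ) (hν : κ.Invariant ν) : μ = ν := by
  obtain ⟨S, hS, hpos, hneg⟩ := hahn_decomposition μ ν
  have hpos' : ν.restrict S ≤ μ.restrict S := Measure.le_iff.2 fun t ht => by
    simpa only [Measure.restrict_apply ht] using hpos _ (ht.inter hS) inter_subset_right
  have hneg' : μ.restrict Sᶜ ≤ ν.restrict Sᶜ := Measure.le_iff.2 fun t ht => by
    simpa only [Measure.restrict_apply ht] using hneg _ (ht.inter hS.compl) inter_subset_right
  by_cases hnull : ∃ x₀, κ x₀ S = 0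
  · obtain ⟨x₀, hx₀⟩ := hnull
    have hrestrict_eq_zero : ∀ ρ : Measure X, κ.Invariant ρ → ρ.restrict S = 0 := fun ρ hρ => by
      rw [Measure.restrict_eq_zero, ← hρ.lintegral_apply hS]
      simp [fun x => hκ x x₀ hx₀]
    exact Measure.eq_of_restrict_eq_of_restrict_compl_le hS
      ((hrestrict_eq_zero μ hμ).trans (hrestrict_eq_zero ν hν).symm) hneg'
  · have hρm : ν.restrict Sᶜ - μ.restrict Sᶜ = 0 := by
      have hzero := hμ.lintegral_apply_sub_restrict_compl_eq_zero hν hS hpos' hneg'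
      rw [lintegral_eq_zero_iff (κ.measurable_coe hS)] at hzero
      by_contra hne
      have := ae_neBot.2 hne
      obtain ⟨x, hx⟩ := hzero.exists
      exact hnull ⟨x, hx⟩
    have hSc : ν.restrict Sᶜ = μ.restrict Sᶜ := by
      rw [← Measure.sub_add_cancel_of_le hneg', hρm, zero_add]
    refine (Measure.eq_of_restrict_eq_of_restrict_compl_le hS.compl hSc ?_).symm
    rwa [compl_compl]

end Doob

end ProbabilityTheory.Kernel

theorem stmt16_general {X : Type} [MetricSpace X] [MeasurableSpace X]
    (P : ℝ → X → Measure X)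
    (hprob : ∀ t x, IsProbabilityMeasure (P t x))
    (hmeas : ∀ t : ℝ, ∀ A : Set X, MeasurableSet A → Measurable fun x => P t x A)
    (hCK : ∀ t s : ℝ, 0 ≤ t → 0 ≤ s → ∀ x, ∀ A : Set X, MeasurableSet A →
      P (t + s) x A = ∫⁻ y, P s y A ∂(P t x))
    (t₁ : ℝ) (ht₁ : 0 < t₁)
    (hSF : ∀ φ : X → ℝ, Measurable φ → (∃ K : ℝ, ∀ x, |φ x| ≤ K) →
      Continuous fun x => ∫ y, φ y ∂(P t₁ x))
    (t₂ : ℝ) (ht₂ : 0 < t₂)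
    (hirr : ∀ x : X, ∀ Γ : Set X, IsOpen Γ → Γ.Nonempty → 0 < P t₂ x Γ)
    (μ ν : Measure X) [IsProbabilityMeasure μ] [IsProbabilityMeasure ν]
    (hμ : ∀ t : ℝ, 0 ≤ t → ∀ A : Set X, MeasurableSet A → ∫⁻ x, P t x A ∂μ = μ A)
    (hν : ∀ t : ℝ, 0 ≤ t → ∀ A : Set X, MeasurableSet A → ∫⁻ x, P t x A ∂ν = ν A) :
    μ = ν := by
  let κ : ℝ → Kernel X X := fun t => ⟨P t, Measure.measurable_of_measurable_coe _ (hmeas t)⟩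
  have _ : ∀ t, IsMarkovKernel (κ t) := fun t => ⟨hprob t⟩
  have hcomp : κ (t₂ + t₁) = κ t₁ ∘ₖ κ t₂ := by
    ext x A hA
    rw [Kernel.comp_apply' _ _ _ hA]
    exact hCK t₂ t₁ ht₂.le ht₁.le x A hA
  have hinvariant (ρ : Measure X)
      (hρ : ∀ t : ℝ, 0 ≤ t → ∀ A : Set X, MeasurableSet A → ∫⁻ x, P t x A ∂ρ = ρ A) :
      (κ (t₂ + t₁)).Invariant ρ := by
    ext A hA
    rw [Measure.bind_apply hA (Kernel.aemeasurable _)]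
    exact hρ _ (by positivity) A hA
  have hregular : (κ (t₂ + t₁)).IsRegular := hcomp ▸ Kernel.IsStrongFeller.isRegular_comp hSF hirr
  exact hregular.eq_of_invariant (hinvariant μ hμ) (hinvariant ν hν)

/-- Uniqueness of the invariant measure via regularity (Khas'minskii + Doob): if a
Markov transition semigroup (P_t) on a Polish space X is strong Feller at some time
t₁ > 0 and irreducible at some time t₂ > 0, then any two invariant probability
measures μ, ν for (P_t) coincide. -/
theorem stmt16 {X : Type} [MetricSpace X] [TopologicalSpace.SeparableSpace X] [CompleteSpace X]
    [MeasurableSpace X] [BorelSpace X]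
    (P : ℝ → X → Measure X)
    (hprob : ∀ t x, IsProbabilityMeasure (P t x))
    (hmeas : ∀ t : ℝ, ∀ A : Set X, MeasurableSet A → Measurable fun x => P t x A)
    (hP0 : ∀ x, P 0 x = Measure.dirac x)
    (hCK : ∀ t s : ℝ, 0 ≤ t → 0 ≤ s → ∀ x, ∀ A : Set X, MeasurableSet A →
      P (t + s) x A = ∫⁻ y, P s y A ∂(P t x))
    (t₁ : ℝ) (ht₁ : 0 < t₁)
    (hSF : ∀ φ : X → ℝ, Measurable φ → (∃ K : ℝ, ∀ x, |φ x| ≤ K) →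
      Continuous fun x => ∫ y, φ y ∂(P t₁ x))
    (t₂ : ℝ) (ht₂ : 0 < t₂)
    (hirr : ∀ x : X, ∀ Γ : Set X, IsOpen Γ → Γ.Nonempty → 0 < P t₂ x Γ)
    (μ ν : Measure X) [IsProbabilityMeasure μ] [IsProbabilityMeasure ν]
    (hμ : ∀ t : ℝ, 0 ≤ t → ∀ A : Set X, MeasurableSet A → ∫⁻ x, P t x A ∂μ = μ A)
    (hν : ∀ t : ℝ, 0 ≤ t → ∀ A : Set X, MeasurableSet A → ∫⁻ x, P t x A ∂ν = ν A) :
    μ = ν :=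
  stmt16_general P hprob hmeas hCK t₁ ht₁ hSF t₂ ht₂ hirr μ ν hμ hν
end

section
/- Log-trick stopping bound: let f : [0,∞) → [0,∞) be absolutely continuous with f(0) = f₀ ≤ M, M ≥ 1. If f'(t) ≤ −ν f(t) + a(t) f(t) + b(t) with ν > 0 and a, b ≥ 0 integrable on [0,t], then ν ∫_0^t 1_{f(s) ≥ M} ds ≤ ∫_0^t ( a(s) + b(s)/M ) ds. -/
open Real MeasureTheory

/-- Log-trick occupation-time bound (deterministic core of Lemma 5.1): let
f : [0,∞) → [0,∞) be differentiable with f(0) ≤ M, M ≥ 1, and suppose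
f'(t) ≤ −ν f(t) + a(t) f(t) + b(t) with ν > 0 and a, b ≥ 0 integrable on [0,t].
Then ν ∫_0^t 1_{f(s) ≥ M} ds ≤ ∫_0^t (a(s) + b(s)/M) ds. -/
theorem stmt18 (ν M t : ℝ) (hν : 0 < ν) (hM : 1 ≤ M) (ht : 0 ≤ t)
    (f f' a b : ℝ → ℝ)
    (hf0 : ∀ s : ℝ, 0 ≤ s → 0 ≤ f s) (hfM : f 0 ≤ M)
    (hf : ∀ s : ℝ, 0 ≤ s → HasDerivAt f (f' s) s)
    (ha0 : ∀ s : ℝ, 0 ≤ s → 0 ≤ a s) (hb0 : ∀ s : ℝ, 0 ≤ s → 0 ≤ b s)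
    (ha : IntegrableOn a (Set.Icc 0 t)) (hb : IntegrableOn b (Set.Icc 0 t))
    (hineq : ∀ s : ℝ, 0 ≤ s → f' s ≤ -ν * f s + a s * f s + b s) :
    ν * ∫ s in (0 : ℝ)..t, (if M ≤ f s then (1 : ℝ) else 0) ≤
      ∫ s in (0 : ℝ)..t, (a s + b s / M) := by
  have hM0 : (0:ℝ) < M := lt_of_lt_of_le one_pos hM
  set ind : ℝ → ℝ := fun s => if M ≤ f s then (1:ℝ) else 0 with hind_def
  -- integrability of the indicator
  have hKclosed : IsClosed (Set.Icc 0 t ∩ f ⁻¹' Set.Ici M) := by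
    apply ContinuousOn.preimage_isClosed_of_isClosed _ isClosed_Icc isClosed_Ici
    exact fun s hs => ((hf s hs.1).continuousAt).continuousWithinAt
  have hindInt : IntegrableOn ind (Set.Icc 0 t) := by
    have h1 : IntegrableOn ((Set.Icc 0 t ∩ f ⁻¹' Set.Ici M).indicator (fun _ => (1:ℝ)))
        (Set.Icc 0 t) := by
      have h0 : IntegrableOn (fun _ : ℝ => (1:ℝ)) (Set.Icc 0 t) :=
        integrableOn_const measure_Icc_lt_top.ne
      exact h0.indicator hKclosed.measurableSet
    apply h1.congr_fun _ measurableSet_Icc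
    intro s hs
    by_cases h : M ≤ f s
    · simp [hind_def, h, Set.indicator_of_mem, Set.mem_inter_iff, hs, Set.mem_preimage,
        Set.mem_Ici]
    · simp [hind_def, h, Set.indicator_of_notMem, Set.mem_inter_iff, Set.mem_preimage,
        Set.mem_Ici]
  have huIcc : Set.uIcc (0:ℝ) t = Set.Icc 0 t := Set.uIcc_of_le ht
  have hindI : IntervalIntegrable ind volume 0 t := by
    rw [intervalIntegrable_iff_integrableOn_Icc_of_le ht]; exact hindInt
  have haI : IntervalIntegrable a volume 0 t := by
    rw [intervalIntegrable_iff_integrableOn_Icc_of_le ht]; exact ha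
  have hbI : IntervalIntegrable b volume 0 t := by
    rw [intervalIntegrable_iff_integrableOn_Icc_of_le ht]; exact hb
  set A : ℝ := ∫ s in (0:ℝ)..t, a s with hA_def
  set B : ℝ := ∫ s in (0:ℝ)..t, b s with hB_def
  set L : ℝ := ∫ s in (0:ℝ)..t, ind s with hL_def
  have hB0 : 0 ≤ B := intervalIntegral.integral_nonneg ht (fun s hs => hb0 s hs.1)
  have hRHS : (∫ s in (0:ℝ)..t, (a s + b s / M)) = A + B * M⁻¹ := by
    rw [intervalIntegral.integral_add haI (hbI.div_const M), intervalIntegral.integral_div]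
    ring
  rw [hRHS]
  -- The key estimate for every small δ > 0
  have key : ∀ δ : ℝ, 0 < δ → δ < M → ν * L ≤ A + B * (M - δ)⁻¹ + δ := by
    intro δ hδ0 hδM
    have hMδ : (0:ℝ) < M - δ := by linarith
    set ψ : ℝ → ℝ := fun v => (min (max ((v - (M - δ))/δ) 0) 1) * (max v 1)⁻¹ with hψ_def
    have hmaxpos : ∀ v : ℝ, (0:ℝ) < max v 1 := fun v => lt_of_lt_of_le one_pos (le_max_right _ _)
    have hψc : Continuous ψ := by
      apply Continuous.mul
      · exact ((((continuous_id.sub continuous_const).div_const δ).max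
          continuous_const).min continuous_const)
      · exact (continuous_id.max continuous_const).inv₀ fun v => (hmaxpos v).ne'
    have hψ0 : ∀ v, 0 ≤ ψ v := fun v =>
      mul_nonneg (le_min (le_max_right _ _) zero_le_one) (inv_nonneg.2 (hmaxpos v).le)
    have hψ1 : ∀ v, ψ v ≤ 1 := by
      intro v
      have h1 : min (max ((v - (M - δ))/δ) 0) 1 ≤ 1 := min_le_right _ _
      have h2 : (max v 1)⁻¹ ≤ 1 := by
        rw [inv_le_one_iff₀]; right; exact le_max_right _ _
      calc ψ v ≤ 1 * (max v 1)⁻¹ :=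
            mul_le_mul_of_nonneg_right h1 (inv_nonneg.2 (hmaxpos v).le)
        _ ≤ 1 := by simpa using h2
    have hψzero : ∀ v, v ≤ M - δ → ψ v = 0 := by
      intro v hv
      have : max ((v - (M - δ))/δ) 0 = 0 :=
        max_eq_right (by rw [div_nonpos_iff]; right; exact ⟨by linarith, hδ0.le⟩)
      simp [hψ_def, this]
    have hη_eq : ∀ v, M ≤ v → v * ψ v = 1 := by
      intro v hv
      have h1 : (1:ℝ) ≤ (v - (M - δ))/δ := by
        rw [le_div_iff₀ hδ0]; linarith
      have hmax : max ((v - (M - δ))/δ) 0 = (v - (M - δ))/δ :=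
        max_eq_left (le_trans zero_le_one h1)
      have hmin : min (max ((v - (M - δ))/δ) 0) 1 = 1 := by
        rw [hmax]; exact min_eq_right h1
      have hv1 : (1:ℝ) ≤ v := le_trans hM hv
      have hmaxv : max v 1 = v := max_eq_left hv1
      have hvne : v ≠ 0 := by linarith
      simp [hψ_def, hmin, hmaxv]
      field_simp
    have hη_le : ∀ v, 0 ≤ v → v * ψ v ≤ 1 := by
      intro v hv
      have h1 : min (max ((v - (M - δ))/δ) 0) 1 ≤ 1 := min_le_right _ _
      have h1' : 0 ≤ min (max ((v - (M - δ))/δ) 0) 1 := le_min (le_max_right _ _) zero_le_one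
      have h2 : v * (max v 1)⁻¹ ≤ 1 := by
        rw [← div_eq_mul_inv]
        exact div_le_one_of_le₀ (le_max_left v 1) (hmaxpos v).le
      have heq : v * ψ v = (min (max ((v - (M - δ))/δ) 0) 1) * (v * (max v 1)⁻¹) := by
        simp only [hψ_def]; ring
      rw [heq]
      calc (min (max ((v - (M - δ))/δ) 0) 1) * (v * (max v 1)⁻¹) ≤ 1 * 1 :=
            mul_le_mul h1 h2 (mul_nonneg hv (inv_nonneg.2 (hmaxpos v).le)) zero_le_one
        _ = 1 := by ring
    have hψM : ∀ v, ψ v ≤ (M - δ)⁻¹ := by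
      intro v
      by_cases hv : v ≤ M - δ
      · rw [hψzero v hv]; positivity
      · push_neg at hv
        have h1 : min (max ((v - (M - δ))/δ) 0) 1 ≤ 1 := min_le_right _ _
        have h2 : (max v 1)⁻¹ ≤ (M - δ)⁻¹ := by
          apply inv_anti₀ hMδ
          exact le_trans hv.le (le_max_left _ _)
        calc ψ v ≤ 1 * (max v 1)⁻¹ :=
              mul_le_mul_of_nonneg_right h1 (inv_nonneg.2 (hmaxpos v).le)
          _ ≤ (M - δ)⁻¹ := by simpa using h2
    -- the primitive φ of ψ based at M - δ
    set φ : ℝ → ℝ := fun u => ∫ v in (M - δ)..u, ψ v with hφ_def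
    have hφd : ∀ u : ℝ, HasDerivAt φ (ψ u) u := fun u =>
      intervalIntegral.integral_hasDerivAt_right (hψc.intervalIntegrable _ _)
        (hψc.stronglyMeasurable.stronglyMeasurableAtFilter) hψc.continuousAt
    have hφ0 : ∀ u : ℝ, 0 ≤ φ u := by
      intro u
      rcases le_total (M - δ) u with hu | hu
      · exact intervalIntegral.integral_nonneg hu fun v _ => hψ0 v
      · have : φ u = ∫ v in (M - δ)..u, (0:ℝ) := by
          apply intervalIntegral.integral_congr
          intro v hv
          rw [Set.uIcc_of_ge hu] at hv
          exact hψzero v hv.2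
        rw [this]; simp
    have hφM : φ M ≤ δ := by
      have h1 : φ M ≤ ∫ v in (M - δ)..M, (1:ℝ) := by
        apply intervalIntegral.integral_mono_on (by linarith)
          (hψc.intervalIntegrable _ _) (intervalIntegrable_const)
        exact fun v _ => hψ1 v
      simpa using h1
    have hφf0 : φ (f 0) ≤ δ := by
      have h1 : φ M - φ (f 0) = ∫ v in (f 0)..M, ψ v :=
        intervalIntegral.integral_interval_sub_left (hψc.intervalIntegrable _ _)
          (hψc.intervalIntegrable _ _)
      have h2 : 0 ≤ ∫ v in (f 0)..M, ψ v :=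
        intervalIntegral.integral_nonneg hfM fun v _ => hψ0 v
      linarith
    -- derivative of φ ∘ f
    have hgd : ∀ s : ℝ, 0 ≤ s → HasDerivAt (fun x => φ (f x)) (ψ (f s) * f' s) s :=
      fun s hs => (hφd (f s)).comp s (hf s hs)
    have hgcont : ContinuousOn (fun x => φ (f x)) (Set.Icc 0 t) :=
      fun s hs => ((hgd s hs.1).continuousAt).continuousWithinAt
    -- the integrable upper bound
    set φ₀ : ℝ → ℝ := fun s => -ν * ind s + (a s + b s * (M - δ)⁻¹) with hφ₀_def
    have hφ₀int : IntegrableOn φ₀ (Set.Icc 0 t) :=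
      (hindInt.const_mul (-ν)).add (ha.add (hb.mul_const _))
    have hpt : ∀ s ∈ Set.Ioo 0 t, ψ (f s) * f' s ≤ φ₀ s := by
      intro s hs
      have hs0 : (0:ℝ) ≤ s := hs.1.le
      have hfs : 0 ≤ f s := hf0 s hs0
      have h1 : ψ (f s) * f' s ≤ ψ (f s) * (-ν * f s + a s * f s + b s) :=
        mul_le_mul_of_nonneg_left (hineq s hs0) (hψ0 (f s))
      have h2 : ψ (f s) * (-ν * f s + a s * f s + b s)
          = -ν * (f s * ψ (f s)) + a s * (f s * ψ (f s)) + b s * ψ (f s) := by ring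
      have h3 : ind s ≤ f s * ψ (f s) := by
        by_cases h : M ≤ f s
        · rw [hη_eq (f s) h]; simp [hind_def, h]
        · simp only [hind_def, if_neg h]
          exact mul_nonneg hfs (hψ0 (f s))
      have h4 : -ν * (f s * ψ (f s)) ≤ -ν * ind s := by
        have := mul_le_mul_of_nonneg_left h3 hν.le
        linarith
      have h5 : a s * (f s * ψ (f s)) ≤ a s :=
        calc a s * (f s * ψ (f s)) ≤ a s * 1 :=
              mul_le_mul_of_nonneg_left (hη_le (f s) hfs) (ha0 s hs0)
          _ = a s := by ring
      have h6 : b s * ψ (f s) ≤ b s * (M - δ)⁻¹ :=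
        mul_le_mul_of_nonneg_left (hψM (f s)) (hb0 s hs0)
      calc ψ (f s) * f' s ≤ -ν * (f s * ψ (f s)) + a s * (f s * ψ (f s)) + b s * ψ (f s) := by
            rw [← h2]; exact h1
        _ ≤ -ν * ind s + (a s + b s * (M - δ)⁻¹) := by linarith
        _ = φ₀ s := rfl
    have hmain : φ (f t) - φ (f 0) ≤ ∫ s in (0:ℝ)..t, φ₀ s :=
      intervalIntegral.sub_le_integral_of_hasDeriv_right_of_le ht hgcont
        (fun x hx => (hgd x hx.1.le).hasDerivWithinAt) hφ₀int hpt
    have hsplit : (∫ s in (0:ℝ)..t, φ₀ s) = -ν * L + (A + B * (M - δ)⁻¹) := by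
      rw [hφ₀_def]
      rw [intervalIntegral.integral_add (hindI.const_mul (-ν)) (haI.add (hbI.mul_const _)),
        intervalIntegral.integral_const_mul,
        intervalIntegral.integral_add haI (hbI.mul_const _),
        intervalIntegral.integral_mul_const]
    have hlhs : -δ ≤ φ (f t) - φ (f 0) := by
      have := hφ0 (f t)
      linarith
    rw [hsplit] at hmain
    linarith
  -- pass to the limit δ → 0⁺
  have hcont : ContinuousAt (fun δ : ℝ => A + B * (M - δ)⁻¹ + δ) 0 := by
    have : ContinuousAt (fun δ : ℝ => M - δ) 0 := by fun_prop
    exact ((continuousAt_const.add (continuousAt_const.mul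
      (this.inv₀ (by simpa using hM0.ne')))).add continuousAt_id)
  have htend : Filter.Tendsto (fun δ : ℝ => A + B * (M - δ)⁻¹ + δ) (nhdsWithin 0 (Set.Ioi 0))
      (nhds (A + B * M⁻¹)) := by
    have h := hcont.tendsto.mono_left (nhdsWithin_le_nhds (s := Set.Ioi (0:ℝ)))
    simpa using h
  refine ge_of_tendsto htend ?_
  filter_upwards [Ioo_mem_nhdsGT hM0] with δ hδ
  exact key δ hδ.1 hδ.2
end
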